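/- Let f = φ ∘ g where g : ℝⁿ → ℝ has a certified affine model g(x) ∈ T_g(x) + [r_min, r_max] on a set H, let y₀ = g(c), and suppose φ : ℝ → ℝ satisfies, for all y in the range J of T_g + [r_min, r_max] over H, the bound φ(y) ∈ φ(y₀) + φ'(y₀)(y - y₀) + [s_min, s_max]. If additionally φ'(y₀) ≥ 0, then for all x ∈ H, φ(g(x)) ∈ φ(y₀) + φ'(y₀)(T_g(x) - y₀) + [φ'(y₀)·r_min + s_min, φ'(y₀)·r_max + s_max]. -/
import Mathlib


/-- Composition rule for certified first-order models: propagating a certified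
affine model of g through a certified first-order model of φ (with
nonnegative slope) yields a certified first-order model of φ ∘ g. -/
theorem stmt_16 {n : ℕ} (H : Set (Fin n → ℝ)) (c : Fin n → ℝ) (hc : c ∈ H)
    (g : (Fin n → ℝ) → ℝ) (Tg : (Fin n → ℝ) → ℝ) (rmin rmax : ℝ)
    (hg : ∀ x ∈ H, Tg x + rmin ≤ g x ∧ g x ≤ Tg x + rmax)
    (φ : ℝ → ℝ) (y₀ : ℝ) (hy₀ : y₀ = g c) (dφ smin smax : ℝ)
    (hdφ : 0 ≤ dφ)
    (J : Set ℝ)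
    (hJ : ∀ x ∈ H, ∀ r ∈ Set.Icc rmin rmax, Tg x + r ∈ J)
    (hφ : ∀ y ∈ J, φ y₀ + dφ * (y - y₀) + smin ≤ φ y ∧
      φ y ≤ φ y₀ + dφ * (y - y₀) + smax) :
    ∀ x ∈ H,
      φ y₀ + dφ * (Tg x - y₀) + (dφ * rmin + smin) ≤ φ (g x) ∧
      φ (g x) ≤ φ y₀ + dφ * (Tg x - y₀) + (dφ * rmax + smax) := by
  intro x hx
  obtain ⟨h1, h2⟩ := hg x hx
  have hmem : g x ∈ J := by
    have := hJ x hx (g x - Tg x) ⟨by linarith, by linarith⟩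
    simpa using this
  obtain ⟨h3, h4⟩ := hφ (g x) hmem
  have b1 : dφ * rmin ≤ dφ * (g x - Tg x) := by nlinarith
  have b2 : dφ * (g x - Tg x) ≤ dφ * rmax := by nlinarith
  constructor <;> nlinarith
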